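/- arXiv:2312.08263 — 5 statements merged into one kernel-verified Lean document; each statement's English description precedes it below -/
import Mathlib

section
/- Let A be a constraint algebra and E, F constraint A-modules. There is a natural injective A_red-module morphism ConHom_A(E,F)_red → Hom_{A_red}(E_red, F_red), sending the class of Φ (with Φ(E_W) ⊆ F_W and Φ(E_N) ⊆ F_N) to the induced map E_W/E_N → F_W/F_N; its kernel in ConHom_A(E,F)_W is ConHom_A(E,F)_N = { Φ : Φ(E_W) ⊆ F_N }. -/
/-- For constraint modules `E`, `F` over a constraint algebra `A`, there is a
natural injective morphism `ConHom_A(E,F)_red → Hom(E_red, F_red)`: each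
constraint morphism `Φ` (with `Φ(E_W) ⊆ F_W`, `Φ(E_N) ⊆ F_N`) induces a map
`E_W/E_N → F_W/F_N` sending the class of `x` to the class of `Φ x`, and two
constraint morphisms induce the same map iff their difference lies in
`ConHom_A(E,F)_N = {Φ : Φ(E_W) ⊆ F_N}` (in particular the kernel of the
reduction map is exactly `ConHom_A(E,F)_N`). -/
theorem constraint_hom_red_injective
    {R : Type*} [Ring R] (S : Subring R)
    {E F : Type*} [AddCommGroup E] [AddCommGroup F] [Module R E] [Module R F]
    (EW EN : Submodule S E) (hE : EN ≤ EW)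
    (FW FN : Submodule S F) (hF : FN ≤ FW) :
    ∃ red : {Φ : E →ₗ[R] F // (∀ x ∈ EW, Φ x ∈ FW) ∧ (∀ x ∈ EN, Φ x ∈ FN)} →
        ((EW ⧸ EN.comap EW.subtype) →ₗ[S] (FW ⧸ FN.comap FW.subtype)),
      (∀ Φ (x : EW), red Φ (Submodule.Quotient.mk x)
          = Submodule.Quotient.mk ⟨Φ.1 x, Φ.2.1 x x.2⟩) ∧
      (∀ Φ Ψ, red Φ = red Ψ ↔ ∀ x ∈ EW, Φ.1 x - Ψ.1 x ∈ FN) ∧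
      (∀ Φ, red Φ = 0 ↔ ∀ x ∈ EW, Φ.1 x ∈ FN) := by
  have mkeq : ∀ (a b : FW), (Submodule.Quotient.mk a :
      FW ⧸ FN.comap FW.subtype) = Submodule.Quotient.mk b ↔ (a : F) - b ∈ FN := by
    intro a b
    rw [Submodule.Quotient.eq]
    rfl
  let lift : ∀ Φ : {Φ : E →ₗ[R] F // (∀ x ∈ EW, Φ x ∈ FW) ∧ (∀ x ∈ EN, Φ x ∈ FN)},
      EW →ₗ[S] (FW ⧸ FN.comap FW.subtype) := fun Φ =>
    (FN.comap FW.subtype).mkQ ∘ₗ ((Φ.1.restrictScalars S).restrict Φ.2.1)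
  refine ⟨fun Φ => Submodule.liftQ _ (lift Φ) ?_, ?_, ?_, ?_⟩
  · intro x hx
    simp only [Submodule.mem_comap] at hx ⊢
    simp only [lift, LinearMap.mem_ker, LinearMap.comp_apply, Submodule.mkQ_apply,
      Submodule.Quotient.mk_eq_zero, Submodule.mem_comap, LinearMap.restrict_coe_apply,
      LinearMap.coe_restrictScalars]
    exact Φ.2.2 x hx
  · intro Φ x; rfl
  · intro Φ Ψ
    constructor
    · intro h x hx
      have := congrFun (congrArg DFunLike.coe h) (Submodule.Quotient.mk ⟨x, hx⟩)
      simp only [Submodule.liftQ_apply, lift, LinearMap.comp_apply, Submodule.mkQ_apply] at this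
      exact (mkeq _ _).mp this
    · intro h
      ext ⟨x, hx⟩
      simp only [Submodule.mkQ_apply, Submodule.liftQ_apply, lift, LinearMap.comp_apply]
      exact (mkeq _ _).mpr (h x hx)
  · intro Φ
    constructor
    · intro h x hx
      have := congrFun (congrArg DFunLike.coe h) (Submodule.Quotient.mk ⟨x, hx⟩)
      simp only [Submodule.liftQ_apply, lift, LinearMap.comp_apply, Submodule.mkQ_apply,
        LinearMap.zero_apply, Submodule.Quotient.mk_eq_zero, Submodule.mem_comap,
        LinearMap.restrict_coe_apply, LinearMap.coe_restrictScalars] at this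
      exact this
    · intro h
      ext ⟨x, hx⟩
      simp only [Submodule.mkQ_apply, Submodule.liftQ_apply, lift, LinearMap.comp_apply,
        LinearMap.zero_apply, Submodule.Quotient.mk_eq_zero, Submodule.mem_comap,
        LinearMap.restrict_coe_apply, LinearMap.coe_restrictScalars]
      exact h x hx
end

section
/- Reduction of strong constraint k-modules is compatible with the tensor product: for strong constraint k-modules E and F over a field k (regarded as the constraint algebra (k,k,0)), there is a natural isomorphism (E ⊗ F)_red ≅ E_red ⊗_k F_red, where (E⊗F)_T = E_T ⊗ F_T, (E⊗F)_W = E_W ⊗ F_W, (E⊗F)_N = E_N ⊗ F_W + E_W ⊗ F_N. -/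
/-!
Over a field every module is flat, so `E_W ⊗ F_W → E_T ⊗ F_T` is injective and `(E ⊗ F)_red` is
`E_W ⊗ F_W` modulo the copy of `E_N ⊗ F_W + E_W ⊗ F_N` inside it. By right exactness of the
tensor product, `(M ⧸ m) ⊗ (N ⧸ n) ≅ (M ⊗ N) ⧸ (m ⊗ N + M ⊗ n)`.
-/

open TensorProduct

namespace Submodule

variable {R M N : Type*} [Ring R] [AddCommGroup M] [AddCommGroup N] [Module R M] [Module R N]

lemma map_subtype_comap_subtype_of_le {p q : Submodule R M} (h : p ≤ q) :
    (p.comap q.subtype).map q.subtype = p := by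
  rw [map_comap_subtype, inf_eq_right.mpr h]

lemma map_ofInjective {f : M →ₗ[R] N} (hf : Function.Injective f) (S : Submodule R M) :
    S.map (LinearEquiv.ofInjective f hf : M →ₗ[R] LinearMap.range f) =
      (S.map f).comap (LinearMap.range f).subtype := by
  ext ⟨_, x, rfl⟩
  simp [hf.eq_iff, show (LinearEquiv.ofInjective f hf).symm ⟨f x, _⟩ = x from
    (LinearEquiv.ofInjective f hf).symm_apply_apply x]

noncomputable def quotientComapRangeEquivOfInjective {f : M →ₗ[R] N} (hf : Function.Injective f)
    {S : Submodule R M} {T : Submodule R N} (hST : S.map f = T) :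
    (LinearMap.range f ⧸ T.comap (LinearMap.range f).subtype) ≃ₗ[R] M ⧸ S :=
  (Quotient.equiv S _ (LinearEquiv.ofInjective f hf) (hST ▸ map_ofInjective hf S)).symm

end Submodule

namespace TensorProduct

variable {R P Q : Type*} [CommSemiring R] [AddCommMonoid P] [AddCommMonoid Q]
  [Module R P] [Module R Q]

lemma map_mapIncl_range_sup_range (p : Submodule R P) (q : Submodule R Q)
    (m : Submodule R p) (n : Submodule R q) :
    (LinearMap.range (map m.subtype LinearMap.id) ⊔
        LinearMap.range (map LinearMap.id n.subtype)).map (mapIncl p q) =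
      LinearMap.range (mapIncl (m.map p.subtype) q) ⊔
        LinearMap.range (mapIncl p (n.map q.subtype)) := by
  rw [Submodule.map_sup, ← LinearMap.range_comp, ← LinearMap.range_comp, ← map_comp, ← map_comp]
  simp only [LinearMap.comp_id, range_map, LinearMap.range_comp, Submodule.range_subtype]

end TensorProduct

/-- Reduction of strong constraint `k`-modules is compatible with the tensor
product: for subspaces `E_N ⊆ E_W ⊆ E_T` and `F_N ⊆ F_W ⊆ F_T` one has a
natural isomorphism `(E ⊗ F)_red ≅ E_red ⊗_k F_red`, where inside `E_T ⊗ F_T`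
one sets `(E⊗F)_W = E_W ⊗ F_W` and `(E⊗F)_N = E_N ⊗ F_W + E_W ⊗ F_N`, and
`X_red = X_W / X_N`. -/
theorem constraint_tensor_red
    {k : Type*} [Field k]
    {E F : Type*} [AddCommGroup E] [AddCommGroup F] [Module k E] [Module k F]
    (EW EN : Submodule k E) (hE : EN ≤ EW)
    (FW FN : Submodule k F) (hF : FN ≤ FW) :
    Nonempty
      ((LinearMap.range (TensorProduct.map EW.subtype FW.subtype) ⧸
          ((LinearMap.range (TensorProduct.map EN.subtype FW.subtype)
              ⊔ LinearMap.range (TensorProduct.map EW.subtype FN.subtype)).comap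
            (LinearMap.range (TensorProduct.map EW.subtype FW.subtype)).subtype))
        ≃ₗ[k] ((EW ⧸ EN.comap EW.subtype) ⊗[k] (FW ⧸ FN.comap FW.subtype))) := by
  have hN := map_mapIncl_range_sup_range EW FW (EN.comap EW.subtype) (FN.comap FW.subtype)
  rw [Submodule.map_subtype_comap_subtype_of_le hE,
    Submodule.map_subtype_comap_subtype_of_le hF] at hN
  exact ⟨(Submodule.quotientComapRangeEquivOfInjective
    (Module.Flat.tensorProduct_mapIncl_injective_of_right EW FW) hN).trans
    (quotientTensorQuotientEquiv _ _).symm⟩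
end

section
/- Let A be a commutative strong constraint algebra and let E be a finitely generated projective strong constraint A-module with constraint dual basis ({e_i}_{i∈M}, {e^i}_{i∈M*}) indexed by a finite constraint index set M. Then the reduced module E_red = E_W/E_N over A_red = A_W/A_N is finitely generated projective, with dual basis given by the classes {(e_i)_red}_{i ∈ M_red} and {(e^i)_red}_{i ∈ M_red}, where M_red = M_W \ M_N. -/
open scoped Classical

/-- A constraint dual basis of a strong constraint module `(E_T, E_W, E_N)` over
a commutative strong constraint algebra `(R, A_W, A_N)`, indexed by a finite
constraint index set `(ι, M_W, M_N)`. -/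
structure ConDualBasis (R : Type*) [CommRing R] (AW : Subring R) (AN : Ideal R)
    (E : Type*) [AddCommGroup E] [Module R E] (EW EN : Set E) where
  ι : Type
  [fin : Fintype ι]
  MW : Set ι
  MN : Set ι
  hMN : MN ⊆ MW
  e : ι → E
  ε : ι → E →ₗ[R] R
  repr : ∀ x : E, x = ∑ i, ε i x • e i
  heW : ∀ i ∈ MW, e i ∈ EW
  heN : ∀ i ∈ MN, e i ∈ EN
  hεW : ∀ i, i ∉ MN → (∀ x ∈ EW, ε i x ∈ AW) ∧ (∀ x ∈ EN, ε i x ∈ AN)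
  hεN : ∀ i, i ∉ MW → ∀ x ∈ EW, ε i x ∈ AN

attribute [instance] ConDualBasis.fin

/-- Let `(R, A_W, A_N)` be a commutative strong constraint algebra and `E` a
finitely generated projective strong constraint module with constraint dual
basis `({e_i}, {e^i})` indexed by a finite constraint index set `M`. Then the
reduced module `E_red = E_W/E_N` over `A_red = A_W/A_N` is finitely generated
projective with dual basis the classes `{(e_i)_red}, {(e^i)_red}` indexed by
`M_red = M_W \ M_N`: expressed on representatives, every `x ∈ E_W` satisfies
`x ≡ ∑_{i ∈ M_W \ M_N} e^i(x) • e_i  (mod E_N)`, and the reduced families are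
well defined (`e_i ∈ E_W` and `e^i` maps `E_W` to `A_W` and `E_N` to `A_N` for
`i ∈ M_red`). -/
theorem conDualBasis_reduction
    {R : Type*} [CommRing R] (AW : Subring R) (AN : Ideal R)
    (hANW : (AN : Set R) ⊆ AW)
    {E : Type*} [AddCommGroup E] [Module R E]
    (EW : AddSubgroup E) (EN : Submodule R E)
    (hENW : (EN : Set E) ⊆ EW)
    (hEWsmul : ∀ a ∈ AW, ∀ x ∈ EW, a • x ∈ EW)
    (hstrong : ∀ (x : E), ∀ a ∈ AN, a • x ∈ EN)
    (db : ConDualBasis R AW AN E (EW : Set E) (EN : Set E)) :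
    (∀ i ∈ db.MW \ db.MN, db.e i ∈ EW) ∧
    (∀ i ∈ db.MW \ db.MN,
      (∀ x ∈ EW, db.ε i x ∈ AW) ∧ (∀ x ∈ EN, db.ε i x ∈ AN)) ∧
    (∀ x ∈ EW,
      x - ∑ i ∈ Finset.univ.filter (fun i => i ∈ db.MW \ db.MN),
        db.ε i x • db.e i ∈ EN) := by
  refine ⟨fun i hi => db.heW i hi.1, fun i hi => db.hεW i hi.2, fun x hx => ?_⟩
  have hsplit := Finset.sum_filter_add_sum_filter_not Finset.univ
    (fun i => i ∈ db.MW \ db.MN) (fun i => db.ε i x • db.e i)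
  have hx2 : x - ∑ i ∈ Finset.univ.filter (fun i => i ∈ db.MW \ db.MN),
      db.ε i x • db.e i
      = ∑ i ∈ Finset.univ.filter (fun i => i ∉ db.MW \ db.MN),
      db.ε i x • db.e i := by
    rw [sub_eq_iff_eq_add, add_comm]
    rw [hsplit]
    exact db.repr x
  rw [hx2]
  apply Submodule.sum_mem
  intro i hi
  simp only [Finset.mem_filter, Set.mem_diff, not_and, not_not] at hi
  by_cases hiW : i ∈ db.MW
  · exact Submodule.smul_mem EN _ (db.heN i (hi.2 hiW))
  · exact hstrong _ _ (db.hεN i hiW x hx)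
end

section
/- Let A be a commutative strong constraint algebra and E, F finitely generated projective strong constraint A-modules. Then the natural map F ⊠_A E* → ConHom_A(E,F), sending y ⊗ α to the homomorphism x ↦ y · α(x), is an isomorphism of constraint A-modules; in particular it restricts to bijections on the W- and N-components. -/
open TensorProduct

/-- For finitely generated projective strong constraint modules `E`, `F` over a
commutative strong constraint algebra, the natural map
`F ⊠_A E* → ConHom_A(E,F)`, `y ⊗ α ↦ (x ↦ α(x) · y)`, is an isomorphism of
constraint modules: it is bijective and restricts to bijections on the W- and
N-components. -/
theorem strTensor_dual_hom_iso
    {R : Type*} [CommRing R] (AW : Subring R) (AN : Ideal R)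
    (hANW : (AN : Set R) ⊆ AW)
    {E F : Type*} [AddCommGroup E] [Module R E] [AddCommGroup F] [Module R F]
    (EW : AddSubgroup E) (EN : Submodule R E) (hENW : (EN : Set E) ⊆ EW)
    (hEWsmul : ∀ a ∈ AW, ∀ x ∈ EW, a • x ∈ EW)
    (hEstrong : ∀ (x : E), ∀ a ∈ AN, a • x ∈ EN)
    (FW : AddSubgroup F) (FN : Submodule R F) (hFNW : (FN : Set F) ⊆ FW)
    (hFWsmul : ∀ a ∈ AW, ∀ y ∈ FW, a • y ∈ FW)
    (hFstrong : ∀ (y : F), ∀ a ∈ AN, a • y ∈ FN)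
    (dbE : ConDualBasis R AW AN E (EW : Set E) (EN : Set E))
    (dbF : ConDualBasis R AW AN F (FW : Set F) (FN : Set F))
    -- the W- and N-components of the dual module `E*`
    (EstarW EstarN : Set (Module.Dual R E))
    (hEstarW : EstarW = {α | (∀ x ∈ EW, α x ∈ AW) ∧ (∀ x ∈ EN, α x ∈ AN)})
    (hEstarN : EstarN = {α | ∀ x ∈ EW, α x ∈ AN})
    -- the W- and N-components of the strong tensor product `F ⊠ E*`
    (TW TN : AddSubgroup (F ⊗[R] Module.Dual R E))
    (hTW : TW = AddSubgroup.closure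
      (Set.image2 (· ⊗ₜ[R] ·) (FW : Set F) EstarW ∪
        Set.image2 (· ⊗ₜ[R] ·) (FN : Set F) Set.univ ∪
        Set.image2 (· ⊗ₜ[R] ·) (Set.univ : Set F) EstarN))
    (hTN : TN = AddSubgroup.closure
      (Set.image2 (· ⊗ₜ[R] ·) (FN : Set F) Set.univ ∪
        Set.image2 (· ⊗ₜ[R] ·) (Set.univ : Set F) EstarN))
    -- the natural map `y ⊗ α ↦ (x ↦ α(x) · y)`
    (μ : F ⊗[R] Module.Dual R E →ₗ[R] (E →ₗ[R] F))
    (hμ : μ = (dualTensorHom R E F).comp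
      (TensorProduct.comm R F (Module.Dual R E)).toLinearMap) :
    Function.Bijective μ ∧
    μ '' TW = {Φ : E →ₗ[R] F | (∀ x ∈ EW, Φ x ∈ FW) ∧ (∀ x ∈ EN, Φ x ∈ FN)} ∧
    μ '' TN = {Φ : E →ₗ[R] F | ∀ x ∈ EW, Φ x ∈ FN} := by
  subst hEstarW hEstarN hTW hTN hμ
  set μ := (dualTensorHom R E F).comp
      (TensorProduct.comm R F (Module.Dual R E)).toLinearMap with hμdef
  set e := dbE.e with he
  set ε := dbE.ε with hε
  have hμapp : ∀ (y : F) (α : Module.Dual R E) (x : E), μ (y ⊗ₜ[R] α) x = α x • y := by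
    intro y α x
    simp [hμdef]
  set ν : (E →ₗ[R] F) → F ⊗[R] Module.Dual R E :=
    fun Φ => ∑ i, Φ (e i) ⊗ₜ[R] ε i with hνdef
  -- μ ∘ ν = id
  have hri : ∀ Φ : E →ₗ[R] F, μ (ν Φ) = Φ := by
    intro Φ
    ext x
    have : μ (ν Φ) x = ∑ i, ε i x • Φ (e i) := by
      simp only [hνdef, map_sum, LinearMap.sum_apply]
      exact Finset.sum_congr rfl fun i _ => hμapp _ _ _
    rw [this]
    calc ∑ i, ε i x • Φ (e i) = Φ (∑ i, ε i x • e i) := by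
          rw [map_sum]; exact Finset.sum_congr rfl fun i _ => (map_smul Φ _ _).symm
      _ = Φ x := by rw [← dbE.repr x]
  -- ν ∘ μ = id
  have hdual : ∀ α : Module.Dual R E, ∑ i, α (e i) • ε i = α := by
    intro α
    ext x
    simp only [LinearMap.sum_apply, LinearMap.smul_apply, smul_eq_mul]
    calc ∑ i, α (e i) * ε i x = α (∑ i, ε i x • e i) := by
          rw [map_sum]
          exact Finset.sum_congr rfl fun i _ => by rw [map_smul, smul_eq_mul, mul_comm]
      _ = α x := by rw [← dbE.repr x]
  have hli : ∀ t : F ⊗[R] Module.Dual R E, ν (μ t) = t := by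
    intro t
    induction t using TensorProduct.induction_on with
    | zero => simp [hνdef]
    | tmul y α =>
        have h1 : ∀ i, (μ (y ⊗ₜ[R] α)) (e i) ⊗ₜ[R] ε i = y ⊗ₜ[R] (α (e i) • ε i) := by
          intro i
          rw [hμapp, smul_tmul]
        calc ν (μ (y ⊗ₜ[R] α)) = ∑ i, y ⊗ₜ[R] (α (e i) • ε i) := Finset.sum_congr rfl fun i _ => h1 i
          _ = y ⊗ₜ[R] (∑ i, α (e i) • ε i) := (TensorProduct.tmul_sum y _ _).symm
          _ = y ⊗ₜ[R] α := by rw [hdual]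
    | add s t hs ht =>
        have : ν (μ s + μ t) = ν (μ s) + ν (μ t) := by
          simp only [hνdef, LinearMap.add_apply, add_tmul, Finset.sum_add_distrib]
        rw [map_add, this, hs, ht]
  have hbij : Function.Bijective μ :=
    Function.bijective_iff_has_inverse.mpr ⟨ν, hli, hri⟩
  refine ⟨hbij, ?_, ?_⟩
  · -- W component
    let WSub : AddSubgroup (E →ₗ[R] F) :=
      { carrier := {Φ : E →ₗ[R] F | (∀ x ∈ EW, Φ x ∈ FW) ∧ (∀ x ∈ EN, Φ x ∈ FN)}
        add_mem' := fun {Φ Ψ} hΦ hΨ =>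
          ⟨fun x hx => by simpa using FW.add_mem (hΦ.1 x hx) (hΨ.1 x hx),
           fun x hx => by simpa using FN.add_mem (hΦ.2 x hx) (hΨ.2 x hx)⟩
        zero_mem' := ⟨fun x _ => by simpa using FW.zero_mem,
                      fun x _ => by simpa using FN.zero_mem⟩
        neg_mem' := fun {Φ} hΦ =>
          ⟨fun x hx => by simpa using FW.neg_mem (hΦ.1 x hx),
           fun x hx => by simpa using FN.neg_mem (hΦ.2 x hx)⟩ }
    have hgen : ∀ t ∈ (Set.image2 (· ⊗ₜ[R] ·) (FW : Set F)
          {α : Module.Dual R E | (∀ x ∈ EW, α x ∈ AW) ∧ (∀ x ∈ EN, α x ∈ AN)} ∪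
          Set.image2 (· ⊗ₜ[R] ·) (FN : Set F) Set.univ ∪
          Set.image2 (· ⊗ₜ[R] ·) (Set.univ : Set F)
          {α : Module.Dual R E | ∀ x ∈ EW, α x ∈ AN}), μ t ∈ WSub := by
      rintro t ((⟨y, hy, α, hα, rfl⟩ | ⟨y, hy, α, -, rfl⟩) | ⟨y, -, α, hα, rfl⟩)
      · exact ⟨fun x hx => by rw [hμapp]; exact hFWsmul _ (hα.1 x hx) _ hy,
               fun x hx => by rw [hμapp]; exact hFstrong _ _ (hα.2 x hx)⟩
      · exact ⟨fun x hx => by rw [hμapp]; exact hFNW (FN.smul_mem _ hy),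
               fun x hx => by rw [hμapp]; exact FN.smul_mem _ hy⟩
      · exact ⟨fun x hx => by rw [hμapp]; exact hFNW (hFstrong _ _ (hα x hx)),
               fun x hx => by rw [hμapp]; exact hFstrong _ _ (hα x (hENW hx))⟩
    ext Φ
    constructor
    · rintro ⟨t, ht, rfl⟩
      exact AddSubgroup.closure_induction (p := fun t _ => μ t ∈ WSub)
        (fun t ht' => hgen t ht')
        (by show _ ∈ _; rw [map_zero]; exact WSub.zero_mem)
        (fun s t _ _ hs' ht' => by show _ ∈ _; rw [map_add]; exact WSub.add_mem hs' ht')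
        (fun s _ hs' => by show _ ∈ _; rw [map_neg]; exact WSub.neg_mem hs') ht
    · intro hΦ
      refine ⟨ν Φ, ?_, hri Φ⟩
      refine AddSubgroup.sum_mem _ fun i _ => AddSubgroup.subset_closure ?_
      by_cases hiN : i ∈ dbE.MN
      · exact Or.inl (Or.inr ⟨Φ (e i), hΦ.2 _ (dbE.heN i hiN), ε i, Set.mem_univ _, rfl⟩)
      · by_cases hiW : i ∈ dbE.MW
        · exact Or.inl (Or.inl ⟨Φ (e i), hΦ.1 _ (dbE.heW i hiW), ε i, dbE.hεW i hiN, rfl⟩)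
        · exact Or.inr ⟨Φ (e i), Set.mem_univ _, ε i, dbE.hεN i hiW, rfl⟩
  · -- N component
    let NSub : AddSubgroup (E →ₗ[R] F) :=
      { carrier := {Φ : E →ₗ[R] F | ∀ x ∈ EW, Φ x ∈ FN}
        add_mem' := fun {Φ Ψ} hΦ hΨ x hx => by simpa using FN.add_mem (hΦ x hx) (hΨ x hx)
        zero_mem' := fun x _ => by simpa using FN.zero_mem
        neg_mem' := fun {Φ} hΦ x hx => by simpa using FN.neg_mem (hΦ x hx) }
    have hgen : ∀ t ∈ (Set.image2 (· ⊗ₜ[R] ·) (FN : Set F) Set.univ ∪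
          Set.image2 (· ⊗ₜ[R] ·) (Set.univ : Set F)
          {α : Module.Dual R E | ∀ x ∈ EW, α x ∈ AN}), μ t ∈ NSub := by
      rintro t (⟨y, hy, α, -, rfl⟩ | ⟨y, -, α, hα, rfl⟩)
      · exact fun x hx => by rw [hμapp]; exact FN.smul_mem _ hy
      · exact fun x hx => by rw [hμapp]; exact hFstrong _ _ (hα x hx)
    ext Φ
    constructor
    · rintro ⟨t, ht, rfl⟩
      exact AddSubgroup.closure_induction (p := fun t _ => μ t ∈ NSub)
        (fun t ht' => hgen t ht')
        (by show _ ∈ _; rw [map_zero]; exact NSub.zero_mem)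
        (fun s t _ _ hs' ht' => by show _ ∈ _; rw [map_add]; exact NSub.add_mem hs' ht')
        (fun s _ hs' => by show _ ∈ _; rw [map_neg]; exact NSub.neg_mem hs') ht
    · intro hΦ
      refine ⟨ν Φ, ?_, hri Φ⟩
      refine AddSubgroup.sum_mem _ fun i _ => AddSubgroup.subset_closure ?_
      by_cases hiW : i ∈ dbE.MW
      · exact Or.inl ⟨Φ (e i), hΦ _ (dbE.heW i hiW), ε i, Set.mem_univ _, rfl⟩
      · exact Or.inr ⟨Φ (e i), Set.mem_univ _, ε i, dbE.hεN i hiW, rfl⟩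
end

section
/- Let A be a constraint algebra. The constraint derivations ConDer(A), with ConDer(A)_T = Der(A_T), ConDer(A)_W = {D ∈ Der(A_T) : D(A_W) ⊆ A_W and D(A_N) ⊆ A_N}, ConDer(A)_N = {D ∈ Der(A_T) : D(A_W) ⊆ A_N}, form a constraint Lie algebra under the commutator bracket: ConDer(A)_W is closed under [·,·], and [ConDer(A)_W, ConDer(A)_N] ⊆ ConDer(A)_N and [ConDer(A)_N, ConDer(A)_W] ⊆ ConDer(A)_N. -/
section

variable {k A : Type*} [CommRing k] [Ring A] [Algebra k A]

/-- A `k`-linear derivation of the (associative unital) `k`-algebra `A`. -/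
def IsConDerivation (D : A →ₗ[k] A) : Prop :=
  ∀ a b : A, D (a * b) = D a * b + a * D b

/-- Membership in the W-component of the constraint derivations:
`D(A_W) ⊆ A_W` and `D(A_N) ⊆ A_N`. -/
def memDerW (W : Subalgebra k A) (N : AddSubgroup A) (D : A →ₗ[k] A) : Prop :=
  (∀ a ∈ W, D a ∈ W) ∧ (∀ a ∈ N, D a ∈ N)

/-- Membership in the N-component of the constraint derivations:
`D(A_W) ⊆ A_N`. -/
def memDerN (W : Subalgebra k A) (N : AddSubgroup A) (D : A →ₗ[k] A) : Prop :=
  ∀ a ∈ W, D a ∈ N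

/-- Let `A = (A_T, A_W, A_N)` be a constraint algebra. The constraint
derivations form a constraint Lie algebra under the commutator bracket: the
commutator of derivations is a derivation, `ConDer(A)_W` is closed under the
bracket, and `[ConDer(A)_W, ConDer(A)_N] ⊆ ConDer(A)_N` as well as
`[ConDer(A)_N, ConDer(A)_W] ⊆ ConDer(A)_N`. -/
theorem constraint_derivations_constraint_lie
    (W : Subalgebra k A) (N : AddSubgroup A)
    (hNW : (N : Set A) ⊆ W)
    (hNl : ∀ a ∈ W, ∀ n ∈ N, a * n ∈ N)
    (hNr : ∀ a ∈ W, ∀ n ∈ N, n * a ∈ N)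
    (D₁ D₂ : A →ₗ[k] A)
    (h₁ : IsConDerivation (k := k) D₁) (h₂ : IsConDerivation (k := k) D₂) :
    IsConDerivation (k := k) (D₁ ∘ₗ D₂ - D₂ ∘ₗ D₁) ∧
    (memDerW W N D₁ → memDerW W N D₂ → memDerW W N (D₁ ∘ₗ D₂ - D₂ ∘ₗ D₁)) ∧
    (memDerW W N D₁ → memDerN W N D₂ → memDerN W N (D₁ ∘ₗ D₂ - D₂ ∘ₗ D₁)) ∧
    (memDerN W N D₁ → memDerW W N D₂ → memDerN W N (D₁ ∘ₗ D₂ - D₂ ∘ₗ D₁)) := by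

  refine ⟨?_, ?_, ?_, ?_⟩
  · intro a b
    simp only [LinearMap.sub_apply, LinearMap.comp_apply]
    rw [h₂ a b, h₁ a b, map_add, map_add, h₁ (D₂ a) b, h₁ a (D₂ b),
      h₂ (D₁ a) b, h₂ a (D₁ b)]
    noncomm_ring
  · rintro ⟨h1W, h1N⟩ ⟨h2W, h2N⟩
    exact ⟨fun a ha => sub_mem (h1W _ (h2W _ ha)) (h2W _ (h1W _ ha)),
      fun a ha => sub_mem (h1N _ (h2N _ ha)) (h2N _ (h1N _ ha))⟩
  · rintro ⟨h1W, h1N⟩ h2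
    exact fun a ha => sub_mem (h1N _ (h2 _ ha)) (h2 _ (h1W _ ha))
  · rintro h1 ⟨h2W, h2N⟩
    exact fun a ha => sub_mem (h1 _ (h2W _ ha)) (h2N _ (h1 _ ha))


end
end
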